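/- arXiv:2110.12343 — 6 statements merged into one kernel-verified Lean document; each statement's English description precedes it below -/
import Mathlib

section
/- Change-of-measure identity for partial-history importance weighting (unbiasedness part of Lemma 1, finite-state form): Let S and A be nonempty finite types, let (P^a)_{a∈A} be row-stochastic matrices on S, let e and π be policies on (S, A) with e(s,a) > 0 for all s ∈ S and a ∈ A, let d be a probability vector on S, let k ∈ ℕ, and let r : S → A → ℝ. Then the importance-weighted sum over all trajectories, namely the sum over (s₁,…,s_{k+1}) ∈ S^{k+1} and (a₁,…,a_{k+1}) ∈ A^{k+1} of d(s₁) · (∏_{h=1}^{k+1} e(s_h, a_h)) · (∏_{h=1}^{k} P^{a_h}(s_h, s_{h+1})) · (∏_{h=1}^{k+1} π(s_h, a_h)/e(s_h, a_h)) · r(s_{k+1}, a_{k+1}), equals Σ_{s∈S} Σ_{a∈A} (d ⬝ (P^π)^k)(s) · π(s, a) · r(s, a), i.e., the expectation of r under the distribution obtained from d by k steps of the target-policy transition matrix P^π, followed by the target policy's action distribution. -/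
open Finset

/-- Row action of a matrix `M` on a vector `f`: `(f ⬝ M) s' = ∑ s, f s * M s s'`. -/
def rowAct {S : Type*} [Fintype S] (M : S → S → ℝ) (f : S → ℝ) : S → ℝ :=
  fun s' => ∑ s, f s * M s s'

/-- A row-stochastic matrix. -/
def IsStochastic {S : Type*} [Fintype S] (M : S → S → ℝ) : Prop :=
  (∀ s s', 0 ≤ M s s') ∧ ∀ s, ∑ s', M s s' = 1

/-- A probability vector. -/
def IsProbVec {S : Type*} [Fintype S] (f : S → ℝ) : Prop :=
  (∀ s, 0 ≤ f s) ∧ ∑ s, f s = 1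

/-!
Summing out the actions path by path: on a fixed state path the behaviour probabilities
`∏ e` cancel against the importance weights `∏ π / e`, and the remaining sum over action
sequences factorises into the product of the one-step kernels `P^π(s_h, s_{h+1})` times the
final factor `∑ b, π(s_{k+1}, b) r(s_{k+1}, b)`. Summing the resulting Markov-chain path
weights over state paths, by induction on the path length, propagates `d` through `k`
applications of `P^π`.
-/

theorem sum_path_mul_eq_sum_iterate_rowAct {S : Type*} [Fintype S] (Q : S → S → ℝ)
    (k : ℕ) (d g : S → ℝ) :
    ∑ s : Fin (k + 1) → S,
        d (s 0) * (∏ h : Fin k, Q (s h.castSucc) (s h.succ)) * g (s (Fin.last k))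
      = ∑ x, (rowAct Q)^[k] d x * g x := by
  induction k generalizing d with
  | zero => simp [← (Equiv.funUnique (Fin 1) S).symm.sum_comp, Fin.last]
  | succ k ih =>
    rw [Function.iterate_succ_apply, ← ih, ← (Fin.consEquiv fun _ => S).sum_comp,
      Fintype.sum_prod_type, Finset.sum_comm]
    refine sum_congr rfl fun t _ => ?_
    simp only [Fin.consEquiv_apply, Fin.prod_univ_succ, Fin.cons_zero, Fin.castSucc_zero,
      Fin.cons_succ, ← Fin.succ_castSucc, ← Fin.succ_last, rowAct, sum_mul]
    refine sum_congr rfl fun x _ => ?_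
    ring

theorem sum_prod_castSucc_mul_last {R A : Type*} [CommSemiring R] [Fintype A] {k : ℕ}
    (f : Fin k → A → R) (g : A → R) :
    ∑ a : Fin (k + 1) → A, (∏ i, f i (a i.castSucc)) * g (a (Fin.last k))
      = (∏ i, ∑ b, f i b) * ∑ b, g b := by
  have h := Fintype.prod_sum fun h : Fin (k + 1) => Fin.lastCases (motive := fun _ => A → R) g f h
  simpa only [Fin.prod_univ_castSucc, Fin.lastCases_castSucc, Fin.lastCases_last] using h.symm

def policyTransition {S A : Type*} [Fintype A] (π : S → A → ℝ) (P : A → S → S → ℝ) :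
    S → S → ℝ :=
  fun x x' => ∑ b, π x b * P b x x'

theorem sum_actions_importance_weighted_eq {S A : Type*} [Fintype A] (P : A → S → S → ℝ)
    (e π : S → A → ℝ) (he : ∀ s a, e s a ≠ 0) (c : ℝ) {k : ℕ} (s : Fin (k + 1) → S)
    (r : S → A → ℝ) :
    ∑ a : Fin (k + 1) → A,
        c * (∏ h, e (s h) (a h)) * (∏ h : Fin k, P (a h.castSucc) (s h.castSucc) (s h.succ)) *
          (∏ h, π (s h) (a h) / e (s h) (a h)) * r (s (Fin.last k)) (a (Fin.last k))
      = c * (∏ h : Fin k, policyTransition π P (s h.castSucc) (s h.succ)) *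
          ∑ b, π (s (Fin.last k)) b * r (s (Fin.last k)) b := by
  have weights_cancel (a : Fin (k + 1) → A) :
      (∏ h, e (s h) (a h)) * ∏ h, π (s h) (a h) / e (s h) (a h) = ∏ h, π (s h) (a h) := by
    rw [prod_div_distrib, mul_div_cancel₀ _ (prod_ne_zero_iff.mpr fun h _ => he _ _)]
  calc _ = ∑ a : Fin (k + 1) → A, c *
          ((∏ i : Fin k,
              π (s i.castSucc) (a i.castSucc) * P (a i.castSucc) (s i.castSucc) (s i.succ)) *
            (π (s (Fin.last k)) (a (Fin.last k)) * r (s (Fin.last k)) (a (Fin.last k)))) := by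
        refine sum_congr rfl fun a _ => ?_
        rw [mul_right_comm (c * _), mul_assoc c, weights_cancel, Fin.prod_univ_castSucc,
          prod_mul_distrib]
        ring
    _ = _ := by
      rw [← mul_sum, mul_assoc, sum_prod_castSucc_mul_last
        (fun i b => π (s i.castSucc) b * P b (s i.castSucc) (s i.succ))
        (fun b => π (s (Fin.last k)) b * r (s (Fin.last k)) b)]
      rfl

theorem partial_history_change_of_measure_general
    {S A : Type*} [Fintype S] [Fintype A]
    (P : A → S → S → ℝ)
    (e π : S → A → ℝ)
    (hepos : ∀ s a, 0 < e s a)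
    (d : S → ℝ)
    (k : ℕ) (r : S → A → ℝ) :
    (∑ s : Fin (k + 1) → S, ∑ a : Fin (k + 1) → A,
        d (s 0) * (∏ h, e (s h) (a h)) *
          (∏ h : Fin k, P (a h.castSucc) (s h.castSucc) (s h.succ)) *
          (∏ h, π (s h) (a h) / e (s h) (a h)) *
          r (s (Fin.last k)) (a (Fin.last k)))
      = ∑ s : S, ∑ a : A,
          ((rowAct (fun x x' => ∑ b, π x b * P b x x'))^[k] d) s * π s a * r s a := by
  simp_rw [sum_actions_importance_weighted_eq P e π (fun s a => (hepos s a).ne')]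
  rw [sum_path_mul_eq_sum_iterate_rowAct (policyTransition π P) k d
    (fun x => ∑ b, π x b * r x b)]
  simp_rw [mul_sum, mul_assoc]
  rfl

/-- Change-of-measure identity for partial-history importance weighting:
the importance-weighted trajectory sum equals the expectation of `r` under the
distribution obtained from `d` by `k` steps of the target-policy transition
matrix `P^π`, followed by the target policy's action distribution. -/
theorem partial_history_change_of_measure
    {S A : Type*} [Fintype S] [Nonempty S] [Fintype A] [Nonempty A]
    (P : A → S → S → ℝ) (hP : ∀ a, IsStochastic (P a))
    (e π : S → A → ℝ)
    (he : ∀ s, IsProbVec (e s)) (hπ : ∀ s, IsProbVec (π s))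
    (hepos : ∀ s a, 0 < e s a)
    (d : S → ℝ) (hd : IsProbVec d)
    (k : ℕ) (r : S → A → ℝ) :
    (∑ s : Fin (k + 1) → S, ∑ a : Fin (k + 1) → A,
        d (s 0) * (∏ h, e (s h) (a h)) *
          (∏ h : Fin k, P (a h.castSucc) (s h.castSucc) (s h.succ)) *
          (∏ h, π (s h) (a h) / e (s h) (a h)) *
          r (s (Fin.last k)) (a (Fin.last k)))
      = ∑ s : S, ∑ a : A,
          ((rowAct (fun x x' => ∑ b, π x b * P b x x'))^[k] d) s * π s a * r s a :=
  partial_history_change_of_measure_general P e π hepos d k r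
end

section
/- Cross-block decorrelation bound (key step in the covariance bound of Lemma 2): Let S be a nonempty finite type, let A and B be row-stochastic matrices on S that are, respectively, γ_A- and γ_B-contractions in total variation with γ_A, γ_B ∈ [0,1], and let d be a probability vector on S with d ⬝ B = d (stationary for B). Then for all m, k ∈ ℕ, ‖(d ⬝ B^m ⬝ A^k) − (d ⬝ A^{k+1} ⬝ B^m ⬝ A^k)‖₁ ≤ 2 · γ_B^m · γ_A^k. -/
/-!
Both vectors are obtained by applying `A^k ∘ B^m` to probability vectors, namely `d` and
`d A^{k+1}`. The contraction bounds multiply along the iterates to `γ_B^m γ_A^k`, and two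
probability vectors are at ℓ1 distance at most `2`.
-/

open Finset

def l1 {S : Type*} [Fintype S] (f : S → ℝ) : ℝ := ∑ s, |f s|

def IsTVContraction {S : Type*} [Fintype S] (M : S → S → ℝ) (γ : ℝ) : Prop :=
  ∀ f f' : S → ℝ, IsProbVec f → IsProbVec f' →
    l1 (fun s => rowAct M f s - rowAct M f' s) ≤ γ * l1 (fun s => f s - f' s)

section

variable {S : Type*} [Fintype S]

lemma l1_sub_le (f f' : S → ℝ) : l1 (fun s => f s - f' s) ≤ l1 f + l1 f' := by
  rw [l1, l1, l1, ← sum_add_distrib]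
  exact sum_le_sum fun s _ => abs_sub (f s) (f' s)

lemma IsProbVec.l1_eq_one {f : S → ℝ} (hf : IsProbVec f) : l1 f = 1 := by
  rw [l1, ← hf.2]
  exact sum_congr rfl fun s _ => abs_of_nonneg (hf.1 s)

lemma IsProbVec.l1_sub_le_two {f f' : S → ℝ} (hf : IsProbVec f) (hf' : IsProbVec f') :
    l1 (fun s => f s - f' s) ≤ 2 := by
  linarith [l1_sub_le f f', hf.l1_eq_one, hf'.l1_eq_one]

lemma IsStochastic.isProbVec_rowAct {M : S → S → ℝ} (hM : IsStochastic M)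
    {f : S → ℝ} (hf : IsProbVec f) : IsProbVec (rowAct M f) := by
  refine ⟨fun s' => sum_nonneg fun s _ => mul_nonneg (hf.1 s) (hM.1 s s'), ?_⟩
  simp only [rowAct]
  rw [sum_comm]
  simp only [← mul_sum, hM.2, mul_one, hf.2]

lemma IsStochastic.isProbVec_iterate_rowAct {M : S → S → ℝ} (hM : IsStochastic M)
    {f : S → ℝ} (hf : IsProbVec f) (n : ℕ) : IsProbVec ((rowAct M)^[n] f) := by
  induction n with
  | zero => exact hf
  | succ n ih =>
    rw [Function.iterate_succ_apply']
    exact hM.isProbVec_rowAct ih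

lemma IsTVContraction.l1_iterate_sub_le {M : S → S → ℝ} {γ : ℝ} (hc : IsTVContraction M γ)
    (hM : IsStochastic M) (hγ : 0 ≤ γ) {f f' : S → ℝ} (hf : IsProbVec f)
    (hf' : IsProbVec f') (n : ℕ) :
    l1 (fun s => (rowAct M)^[n] f s - (rowAct M)^[n] f' s)
      ≤ γ ^ n * l1 (fun s => f s - f' s) := by
  induction n with
  | zero => simp
  | succ n ih =>
    simp only [Function.iterate_succ_apply']
    calc _ ≤ γ * l1 (fun s => (rowAct M)^[n] f s - (rowAct M)^[n] f' s) :=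
          hc _ _ (hM.isProbVec_iterate_rowAct hf n) (hM.isProbVec_iterate_rowAct hf' n)
      _ ≤ γ * (γ ^ n * l1 (fun s => f s - f' s)) := mul_le_mul_of_nonneg_left ih hγ
      _ = γ ^ (n + 1) * l1 (fun s => f s - f' s) := by ring

end

theorem cross_block_decorrelation_general
    {S : Type*} [Fintype S]
    (A B : S → S → ℝ) (hA : IsStochastic A) (hB : IsStochastic B)
    (γA γB : ℝ) (hγA : γA ∈ Set.Icc (0 : ℝ) 1) (hγB : γB ∈ Set.Icc (0 : ℝ) 1)
    (hcA : ∀ f f' : S → ℝ, IsProbVec f → IsProbVec f' →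
      l1 (fun s => rowAct A f s - rowAct A f' s) ≤ γA * l1 (fun s => f s - f' s))
    (hcB : ∀ f f' : S → ℝ, IsProbVec f → IsProbVec f' →
      l1 (fun s => rowAct B f s - rowAct B f' s) ≤ γB * l1 (fun s => f s - f' s))
    (d : S → ℝ) (hd : IsProbVec d) (m k : ℕ) :
    l1 (fun s => ((rowAct A)^[k] ((rowAct B)^[m] d)) s -
        ((rowAct A)^[k] ((rowAct B)^[m] ((rowAct A)^[k + 1] d))) s)
      ≤ 2 * γB ^ m * γA ^ k := by
  have hdA := hA.isProbVec_iterate_rowAct hd (k + 1)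
  have hcA' : IsTVContraction A γA := hcA
  have hcB' : IsTVContraction B γB := hcB
  have hBm : l1 (fun s => (rowAct B)^[m] d s - (rowAct B)^[m] ((rowAct A)^[k + 1] d) s)
      ≤ γB ^ m * 2 :=
    (hcB'.l1_iterate_sub_le hB hγB.1 hd hdA m).trans
      (mul_le_mul_of_nonneg_left (hd.l1_sub_le_two hdA) (pow_nonneg hγB.1 m))
  calc _ ≤ γA ^ k * l1 (fun s => (rowAct B)^[m] d s -
          (rowAct B)^[m] ((rowAct A)^[k + 1] d) s) :=
        hcA'.l1_iterate_sub_le hA hγA.1 (hB.isProbVec_iterate_rowAct hd m)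
          (hB.isProbVec_iterate_rowAct hdA m) k
    _ ≤ γA ^ k * (γB ^ m * 2) := mul_le_mul_of_nonneg_left hBm (pow_nonneg hγA.1 k)
    _ = 2 * γB ^ m * γA ^ k := by ring

/-- Cross-block decorrelation bound: with `d` stationary for `B`,
`‖d B^m A^k − d A^{k+1} B^m A^k‖₁ ≤ 2 γ_B^m γ_A^k`. -/
theorem cross_block_decorrelation
    {S : Type*} [Fintype S] [Nonempty S]
    (A B : S → S → ℝ) (hA : IsStochastic A) (hB : IsStochastic B)
    (γA γB : ℝ) (hγA : γA ∈ Set.Icc (0 : ℝ) 1) (hγB : γB ∈ Set.Icc (0 : ℝ) 1)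
    (hcA : ∀ f f' : S → ℝ, IsProbVec f → IsProbVec f' →
      l1 (fun s => rowAct A f s - rowAct A f' s) ≤ γA * l1 (fun s => f s - f' s))
    (hcB : ∀ f f' : S → ℝ, IsProbVec f → IsProbVec f' →
      l1 (fun s => rowAct B f s - rowAct B f' s) ≤ γB * l1 (fun s => f s - f' s))
    (d : S → ℝ) (hd : IsProbVec d) (hstat : rowAct B d = d) (m k : ℕ) :
    l1 (fun s => ((rowAct A)^[k] ((rowAct B)^[m] d)) s -
        ((rowAct A)^[k] ((rowAct B)^[m] ((rowAct A)^[k + 1] d))) s)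
      ≤ 2 * γB ^ m * γA ^ k :=
  cross_block_decorrelation_general A B hA hB γA γB hγA hγB hcA hcB d hd m k
end

section
/- Weighted second-moment bound under overlap (variance component of Lemma 2, finite-state form): Let S and A be nonempty finite types, let (P^a)_{a∈A} be row-stochastic matrices on S, let e and π be policies on (S, A) with e(s,a) > 0 for all s, a, and suppose π satisfies ζ-overlap with respect to e for some ζ ≥ 0, i.e., π(s,a) ≤ exp(ζ) · e(s,a) for all s, a. Let d be a probability vector on S, k ∈ ℕ, and m₂ : S → A → ℝ with 0 ≤ m₂(s,a) ≤ M₂ for all s, a, where M₂ ≥ 0. Then the sum over all trajectories (s₁,…,s_{k+1}) ∈ S^{k+1} and (a₁,…,a_{k+1}) ∈ A^{k+1} of d(s₁) · (∏_{h=1}^{k+1} e(s_h, a_h)) · (∏_{h=1}^{k} P^{a_h}(s_h, s_{h+1})) · (∏_{h=1}^{k+1} (π(s_h,a_h)/e(s_h,a_h))²) · m₂(s_{k+1}, a_{k+1}) is at most M₂ · exp(ζ·(k+1)). -/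
/-!
Importance weighting turns the `e`-weighted trajectory sum into a `π`-weighted one: at each step
`e (π / e)² = π · (π / e) ≤ exp ζ · π` by overlap, so the `k + 1` squared ratios cost at most
`exp (ζ (k + 1))`, and `m₂ ≤ M₂`. What remains is `M₂ exp (ζ (k + 1))` times the total mass of the
trajectories of the Markov chain driven by `π`, which is `1`: summing out the last state and action
leaves the mass of the trajectories one step shorter.
-/

open Finset

theorem mul_div_sq_le_of_le_mul {e p c : ℝ} (he : 0 < e) (hp : 0 ≤ p) (hpe : p ≤ c * e) :
    e * (p / e) ^ 2 ≤ c * p :=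
  calc e * (p / e) ^ 2 = p / e * p := by field_simp
    _ ≤ c * p := mul_le_mul_of_nonneg_right ((div_le_iff₀ he).2 hpe) hp

theorem prod_mul_prod_div_sq_le {ι : Type*} [Fintype ι] {e p : ι → ℝ} {c : ℝ}
    (he : ∀ i, 0 < e i) (hp : ∀ i, 0 ≤ p i) (hpe : ∀ i, p i ≤ c * e i) :
    (∏ i, e i) * ∏ i, (p i / e i) ^ 2 ≤ c ^ Fintype.card ι * ∏ i, p i :=
  calc (∏ i, e i) * ∏ i, (p i / e i) ^ 2 = ∏ i, e i * (p i / e i) ^ 2 := prod_mul_distrib.symm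
    _ ≤ ∏ i, c * p i := prod_le_prod (fun i _ => by have := he i; positivity)
        fun i _ => mul_div_sq_le_of_le_mul (he i) (hp i) (hpe i)
    _ = c ^ Fintype.card ι * ∏ i, p i := by rw [prod_mul_distrib, prod_const, card_univ]

theorem sum_pi_fin_succ_eq_sum_snoc {α M : Type*} [Fintype α] [AddCommMonoid M] {n : ℕ}
    (f : (Fin (n + 1) → α) → M) : ∑ x, f x = ∑ x : Fin n → α, ∑ y, f (Fin.snoc x y) := by
  rw [← (Fin.snocEquiv fun _ => α).sum_comp, Fintype.sum_prod_type_right]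
  rfl

section Trajectory

variable {S A : Type*}

def trajectoryWeight (P : A → S → S → ℝ) (π : S → A → ℝ) (d : S → ℝ) {k : ℕ}
    (s : Fin (k + 1) → S) (a : Fin (k + 1) → A) : ℝ :=
  d (s 0) * (∏ h, π (s h) (a h)) * ∏ h : Fin k, P (a h.castSucc) (s h.castSucc) (s h.succ)

theorem trajectoryWeight_snoc (P : A → S → S → ℝ) (π : S → A → ℝ) (d : S → ℝ) {k : ℕ}
    (s : Fin (k + 1) → S) (a : Fin (k + 1) → A) (s' : S) (a' : A) :
    trajectoryWeight P π d (Fin.snoc s s' : Fin (k + 2) → S) (Fin.snoc a a' : Fin (k + 2) → A) =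
      trajectoryWeight P π d s a * (P (a (Fin.last k)) (s (Fin.last k)) s' * π s' a') := by
  have h0 : (Fin.snoc s s' : Fin (k + 2) → S) 0 = s 0 := Fin.snoc_castSucc (i := 0) ..
  simp only [trajectoryWeight, Fin.prod_univ_castSucc (n := k + 1), Fin.prod_univ_castSucc (n := k),
    Fin.succ_castSucc, Fin.snoc_castSucc, Fin.snoc_last, Fin.succ_last, h0]
  ring

theorem trajectoryWeight_nonneg {P : A → S → S → ℝ} {π : S → A → ℝ} {d : S → ℝ}
    (hP : ∀ a s s', 0 ≤ P a s s') (hπ : ∀ s a, 0 ≤ π s a) (hd : ∀ s, 0 ≤ d s) {k : ℕ}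
    (s : Fin (k + 1) → S) (a : Fin (k + 1) → A) : 0 ≤ trajectoryWeight P π d s a :=
  mul_nonneg (mul_nonneg (hd _) (prod_nonneg fun _ _ => hπ _ _))
    (prod_nonneg fun _ _ => hP _ _ _)

theorem trajectoryWeight_mul_prod_div_sq_le {P : A → S → S → ℝ} {e π : S → A → ℝ} {d : S → ℝ}
    {c : ℝ} (hP : ∀ a s s', 0 ≤ P a s s') (hd : ∀ s, 0 ≤ d s) (he : ∀ s a, 0 < e s a)
    (hπ : ∀ s a, 0 ≤ π s a) (hover : ∀ s a, π s a ≤ c * e s a) {k : ℕ}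
    (s : Fin (k + 1) → S) (a : Fin (k + 1) → A) :
    trajectoryWeight P e d s a * ∏ h, (π (s h) (a h) / e (s h) (a h)) ^ 2 ≤
      c ^ (k + 1) * trajectoryWeight P π d s a := by
  have hratio := prod_mul_prod_div_sq_le (fun h => he (s h) (a h)) (fun h => hπ (s h) (a h))
    fun h => hover (s h) (a h)
  rw [Fintype.card_fin] at hratio
  have hrest : 0 ≤ d (s 0) * ∏ h : Fin k, P (a h.castSucc) (s h.castSucc) (s h.succ) :=
    mul_nonneg (hd _) (prod_nonneg fun _ _ => hP _ _ _)
  unfold trajectoryWeight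
  linear_combination mul_le_mul_of_nonneg_left hratio hrest

variable [Fintype S] [Fintype A]

theorem sum_trajectoryWeight {P : A → S → S → ℝ} {π : S → A → ℝ} {d : S → ℝ}
    (hP : ∀ a, IsStochastic (P a)) (hπ : ∀ s, IsProbVec (π s)) (hd : IsProbVec d) (k : ℕ) :
    ∑ s : Fin (k + 1) → S, ∑ a : Fin (k + 1) → A, trajectoryWeight P π d s a = 1 := by
  induction k with
  | zero =>
    rw [← (Equiv.funUnique (Fin 1) S).symm.sum_comp]
    simp [trajectoryWeight, ← (Equiv.funUnique (Fin 1) A).symm.sum_comp, ← mul_sum, (hπ _).2, hd.2]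
  | succ k ih =>
    rw [sum_pi_fin_succ_eq_sum_snoc]
    simp_rw [sum_pi_fin_succ_eq_sum_snoc (fun a => trajectoryWeight P π d _ a),
      trajectoryWeight_snoc]
    refine (sum_congr rfl fun s _ => ?_).trans ih
    rw [sum_comm]
    simp only [← mul_sum, (hπ _).2, (hP _).2, mul_one]

end Trajectory

theorem weighted_second_moment_bound_general
    {S A : Type*} [Fintype S] [Fintype A]
    (P : A → S → S → ℝ) (hP : ∀ a, IsStochastic (P a))
    (e π : S → A → ℝ)
    (hπ : ∀ s, IsProbVec (π s))
    (hepos : ∀ s a, 0 < e s a)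
    (ζ : ℝ) (hover : ∀ s a, π s a ≤ Real.exp ζ * e s a)
    (d : S → ℝ) (hd : IsProbVec d) (k : ℕ)
    (M₂ : ℝ)
    (m₂ : S → A → ℝ) (hm₂ : ∀ s a, 0 ≤ m₂ s a ∧ m₂ s a ≤ M₂) :
    (∑ s : Fin (k + 1) → S, ∑ a : Fin (k + 1) → A,
        d (s 0) * (∏ h, e (s h) (a h)) *
          (∏ h : Fin k, P (a h.castSucc) (s h.castSucc) (s h.succ)) *
          (∏ h, (π (s h) (a h) / e (s h) (a h)) ^ 2) *
          m₂ (s (Fin.last k)) (a (Fin.last k)))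
      ≤ M₂ * Real.exp (ζ * (k + 1)) := by
  have hP₀ : ∀ a s s', 0 ≤ P a s s' := fun a => (hP a).1
  have hπ₀ : ∀ s a, 0 ≤ π s a := fun s => (hπ s).1
  calc _ ≤ ∑ s : Fin (k + 1) → S, ∑ a : Fin (k + 1) → A,
          Real.exp ζ ^ (k + 1) * trajectoryWeight P π d s a * M₂ := by
        refine sum_le_sum fun s _ => sum_le_sum fun a _ => ?_
        exact mul_le_mul (trajectoryWeight_mul_prod_div_sq_le hP₀ hd.1 hepos hπ₀ hover s a)
          (hm₂ _ _).2 (hm₂ _ _).1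
          (mul_nonneg (by positivity) (trajectoryWeight_nonneg hP₀ hπ₀ hd.1 s a))
    _ = M₂ * Real.exp (ζ * (k + 1)) := by
        simp only [← sum_mul, ← mul_sum, sum_trajectoryWeight hP hπ hd, mul_one]
        rw [mul_comm, ← Real.exp_nat_mul, mul_comm ζ, Nat.cast_succ]

/-- Weighted second-moment bound under overlap: the trajectory sum with squared
importance ratios and a payoff bounded by `M₂` is at most `M₂ * exp (ζ * (k+1))`. -/
theorem weighted_second_moment_bound
    {S A : Type*} [Fintype S] [Nonempty S] [Fintype A] [Nonempty A]
    (P : A → S → S → ℝ) (hP : ∀ a, IsStochastic (P a))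
    (e π : S → A → ℝ)
    (he : ∀ s, IsProbVec (e s)) (hπ : ∀ s, IsProbVec (π s))
    (hepos : ∀ s a, 0 < e s a)
    (ζ : ℝ) (hζ : 0 ≤ ζ) (hover : ∀ s a, π s a ≤ Real.exp ζ * e s a)
    (d : S → ℝ) (hd : IsProbVec d) (k : ℕ)
    (M₂ : ℝ) (hM₂ : 0 ≤ M₂)
    (m₂ : S → A → ℝ) (hm₂ : ∀ s a, 0 ≤ m₂ s a ∧ m₂ s a ≤ M₂) :
    (∑ s : Fin (k + 1) → S, ∑ a : Fin (k + 1) → A,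
        d (s 0) * (∏ h, e (s h) (a h)) *
          (∏ h : Fin k, P (a h.castSucc) (s h.castSucc) (s h.succ)) *
          (∏ h, (π (s h) (a h) / e (s h) (a h)) ^ 2) *
          m₂ (s (Fin.last k)) (a (Fin.last k)))
      ≤ M₂ * Real.exp (ζ * (k + 1)) :=
  weighted_second_moment_bound_general P hP e π hπ hepos ζ hover d hd k M₂ m₂ hm₂
end

section
/- Overlapping-block cross-moment bound (covariance bound for overlapping windows in the proof of Lemma 2, finite-state form): Let S and A be nonempty finite types, let (P^a)_{a∈A} be row-stochastic matrices on S, let e and π be policies on (S, A) with e(s,a) > 0 for all s, a, and suppose π satisfies ζ-overlap with respect to e for some ζ ≥ 0. Let d be a probability vector on S, let k ∈ ℕ and 1 ≤ j ≤ k, and let r : S → A → ℝ with |r(s,a)| ≤ M₁ for all s, a, where M₁ ≥ 0. Then the absolute value of the sum over all trajectories (s₁,…,s_{k+1+j}) ∈ S^{k+1+j} and (a₁,…,a_{k+1+j}) ∈ A^{k+1+j} of d(s₁) · (∏_{h=1}^{k+1+j} e(s_h, a_h)) · (∏_{h=1}^{k+j} P^{a_h}(s_h, s_{h+1})) · (∏_{h=1}^{j}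 π(s_h,a_h)/e(s_h,a_h)) · (∏_{h=j+1}^{k+1} (π(s_h,a_h)/e(s_h,a_h))²) · (∏_{h=k+2}^{k+1+j} π(s_h,a_h)/e(s_h,a_h)) · r(s_{k+1}, a_{k+1}) · r(s_{k+1+j}, a_{k+1+j}) is at most M₁² · exp(ζ·(k−j+1)). -/
/-!
Bounding the two rewards by `M₁` leaves a nonnegative trajectory sum in which step `h` carries
the weight `e · (π / e) ^ m_h`, with `m_h = 2` where the two importance-weighted blocks overlap
(`j ≤ h ≤ k`) and `m_h = 1` elsewhere. Summed over the action this weight is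
`∑ₐ π · (π / e) ^ (m_h - 1)`: it is `1` off the overlap and at most `exp ζ` on it, by ζ-overlap.
Integrating the trajectory out one step at a time, every row of a transition matrix has mass one,
so the whole sum is at most the product of the per-step bounds, `exp (ζ (k - j + 1))`.
-/

open Finset

lemma Fin.sum_univ_pi_succ {α M : Type*} [Fintype α] [AddCommMonoid M] {n : ℕ}
    (f : (Fin (n + 1) → α) → M) : ∑ x, f x = ∑ x₀, ∑ x, f (Fin.cons x₀ x) := by
  rw [← (Fin.consEquiv fun _ => α).sum_comp, Fintype.sum_prod_type]
  rfl

namespace IsProbVec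

variable {S : Type*} [Fintype S] {f : S → ℝ}

lemma nonempty (hf : IsProbVec f) : Nonempty S := by
  by_contra h
  simpa [not_nonempty_iff.mp h] using hf.2

lemma sum_le_of_le_mul (hf : IsProbVec f) {g : S → ℝ} {c : ℝ} (hg : ∀ s, g s ≤ c * f s) :
    ∑ s, g s ≤ c := by
  calc ∑ s, g s ≤ ∑ s, c * f s := sum_le_sum fun s _ => hg s
    _ = c := by rw [← mul_sum, hf.2, mul_one]

end IsProbVec

section Trajectory

variable {S A : Type*} [Fintype S] [Fintype A]

def weightedTrajectorySum (P : A → S → S → ℝ) (d : S → ℝ) {n : ℕ}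
    (w : Fin (n + 1) → S → A → ℝ) : ℝ :=
  ∑ s : Fin (n + 1) → S, ∑ a : Fin (n + 1) → A,
    d (s 0) * (∏ h, w h (s h) (a h)) * ∏ h : Fin n, P (a h.castSucc) (s h.castSucc) (s h.succ)

lemma weightedTrajectorySum_zero (P : A → S → S → ℝ) (d : S → ℝ) (w : Fin 1 → S → A → ℝ) :
    weightedTrajectorySum P d w = ∑ x, d x * ∑ b, w 0 x b := by
  simp [weightedTrajectorySum, Fin.sum_univ_pi_succ, mul_sum]

lemma weightedTrajectorySum_succ (P : A → S → S → ℝ) (d : S → ℝ) {n : ℕ}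
    (w : Fin (n + 2) → S → A → ℝ) :
    weightedTrajectorySum P d w =
      ∑ x, ∑ b, d x * w 0 x b * weightedTrajectorySum P (P b x) (fun h => w h.succ) := by
  simp only [weightedTrajectorySum, Fin.sum_univ_pi_succ (n := n + 1), Fin.prod_univ_succ,
    Fin.cons_zero, Fin.cons_succ, Fin.castSucc_zero, ← Fin.succ_castSucc, mul_sum]
  refine sum_congr rfl fun x _ => ?_
  rw [sum_comm]
  refine sum_congr rfl fun s _ => sum_congr rfl fun b _ => sum_congr rfl fun a _ => ?_
  ring

theorem weightedTrajectorySum_le_prod {P : A → S → S → ℝ} (hP : ∀ a, IsStochastic (P a))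
    {n : ℕ} {w : Fin (n + 1) → S → A → ℝ} {c : Fin (n + 1) → ℝ} (hw : ∀ h s a, 0 ≤ w h s a)
    (hc : ∀ h s, ∑ a, w h s a ≤ c h) {d : S → ℝ} (hd : IsProbVec d) :
    weightedTrajectorySum P d w ≤ ∏ h, c h := by
  induction n generalizing d with
  | zero =>
    rw [weightedTrajectorySum_zero, Fin.prod_univ_one]
    exact hd.sum_le_of_le_mul fun x => by
      rw [mul_comm]; exact mul_le_mul_of_nonneg_right (hc 0 x) (hd.1 x)
  | succ m ih =>
    obtain ⟨s₀⟩ := hd.nonempty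
    have hc₀ : ∀ h, 0 ≤ c h := fun h => (sum_nonneg fun a _ => hw h s₀ a).trans (hc h s₀)
    rw [weightedTrajectorySum_succ, Fin.prod_univ_succ]
    set C := ∏ h : Fin (m + 1), c h.succ
    have htail : ∀ b x, weightedTrajectorySum P (P b x) (fun h : Fin (m + 1) => w h.succ) ≤ C :=
      fun b x => ih (fun h => hw h.succ) (fun h => hc h.succ) ⟨(hP b).1 x, (hP b).2 x⟩
    refine hd.sum_le_of_le_mul fun x => ?_
    calc ∑ b, d x * w 0 x b * weightedTrajectorySum P (P b x) (fun h => w h.succ)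
        ≤ ∑ b, d x * w 0 x b * C := sum_le_sum fun b _ =>
          mul_le_mul_of_nonneg_left (htail b x) (mul_nonneg (hd.1 x) (hw 0 x b))
      _ = d x * (∑ b, w 0 x b) * C := by rw [mul_sum, sum_mul]
      _ ≤ d x * c 0 * C := by
          gcongr
          exacts [prod_nonneg fun h _ => hc₀ _, hd.1 x, hc 0 x]
      _ = c 0 * C * d x := by ring

end Trajectory

lemma sum_mul_div_eq_one {A : Type*} [Fintype A] {e π : A → ℝ} (he : ∀ a, 0 < e a)
    (hπ : IsProbVec π) : ∑ a, e a * (π a / e a) = 1 := by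
  simp_rw [mul_div_cancel₀ _ (he _).ne']
  exact hπ.2

lemma sum_mul_div_sq_le {A : Type*} [Fintype A] {e π : A → ℝ} {K : ℝ} (he : ∀ a, 0 < e a)
    (hπ : IsProbVec π) (hover : ∀ a, π a ≤ K * e a) : ∑ a, e a * (π a / e a) ^ 2 ≤ K := by
  refine hπ.sum_le_of_le_mul fun a => ?_
  rw [sq, ← mul_assoc, mul_div_cancel₀ _ (he a).ne', mul_comm]
  exact mul_le_mul_of_nonneg_right ((div_le_iff₀ (he a)).2 (hover a)) (hπ.1 a)

section OverlapWeight

variable {S A : Type*} {e π : S → A → ℝ}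

noncomputable def overlapWeight (e π : S → A → ℝ) (j k h : ℕ) (s : S) (a : A) : ℝ :=
  e s a * (π s a / e s a) ^ (if j ≤ h ∧ h ≤ k then 2 else 1)

lemma overlapWeight_nonneg (he : ∀ s a, 0 < e s a) (hπ : ∀ s a, 0 ≤ π s a) (j k h : ℕ) (s : S)
    (a : A) : 0 ≤ overlapWeight e π j k h s a :=
  mul_nonneg (he s a).le (pow_nonneg (div_nonneg (hπ s a) (he s a).le) _)

lemma sum_overlapWeight_le [Fintype A] {K : ℝ} (he : ∀ s a, 0 < e s a)
    (hπ : ∀ s, IsProbVec (π s)) (hover : ∀ s a, π s a ≤ K * e s a) (j k h : ℕ) (s : S) :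
    ∑ a, overlapWeight e π j k h s a ≤ if j ≤ h ∧ h ≤ k then K else 1 := by
  simp only [overlapWeight]
  split_ifs
  · exact sum_mul_div_sq_le (he s) (hπ s) (hover s)
  · simp only [pow_one]
    exact (sum_mul_div_eq_one (he s) (hπ s)).le

end OverlapWeight

lemma prod_filter_lt_mul_prod_filter_sq_mul_prod_filter_gt {M : Type*} [CommMonoid M]
    {n j k : ℕ} (hjk : j ≤ k + 1) (f : Fin n → M) :
    (∏ h ∈ univ.filter (fun h : Fin n => h.val < j), f h) *
        (∏ h ∈ univ.filter (fun h : Fin n => j ≤ h.val ∧ h.val ≤ k), f h ^ 2) *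
        (∏ h ∈ univ.filter (fun h : Fin n => k + 1 ≤ h.val), f h) =
      ∏ h, f h ^ (if j ≤ h.val ∧ h.val ≤ k then 2 else 1) := by
  simp only [prod_filter, ← prod_mul_distrib]
  refine prod_congr rfl fun h _ => ?_
  split_ifs <;> first | omega | simp [pow_two]

lemma Fin.card_filter_le_val_le {n j k : ℕ} (hk : k < n) :
    #{h : Fin n | j ≤ h.val ∧ h.val ≤ k} = k + 1 - j := by
  rw [← Nat.card_Icc, ← card_map Fin.valEmbedding, map_filter', Fin.map_valEmbedding_univ]
  congr 1
  ext i
  simp [Fin.exists_iff]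
  omega

lemma prod_ite_exp_window {n j k : ℕ} (hjk : j ≤ k + 1) (hk : k < n) (ζ : ℝ) :
    ∏ h : Fin n, (if j ≤ h.val ∧ h.val ≤ k then Real.exp ζ else 1) =
      Real.exp (ζ * ((k : ℝ) - j + 1)) := by
  rw [prod_ite, prod_const, prod_const_one, mul_one, Fin.card_filter_le_val_le hk,
    ← Real.exp_nat_mul, Nat.cast_sub hjk]
  congr 1
  push_cast
  ring

lemma abs_mul_mul_le_sq_mul {x r₁ r₂ M : ℝ} (hx : 0 ≤ x) (hM : 0 ≤ M) (h₁ : |r₁| ≤ M)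
    (h₂ : |r₂| ≤ M) : |x * r₁ * r₂| ≤ M ^ 2 * x := by
  rw [abs_mul, abs_mul, abs_of_nonneg hx, mul_assoc, mul_comm, sq]
  exact mul_le_mul_of_nonneg_right (mul_le_mul h₁ h₂ (abs_nonneg _) hM) hx

/-- Trajectory indices are `0`-indexed, so
`h.val < j` corresponds to the `1`-indexed range `1 ≤ h ≤ j`, `j ≤ h.val ≤ k` to
`j+1 ≤ h ≤ k+1`, and `k+1 ≤ h.val` to `k+2 ≤ h ≤ k+1+j`. -/
theorem overlapping_block_cross_moment_bound
    {S A : Type*} [Fintype S] [Fintype A]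
    (P : A → S → S → ℝ) (hP : ∀ a, IsStochastic (P a))
    (e π : S → A → ℝ)
    (hπ : ∀ s, IsProbVec (π s))
    (hepos : ∀ s a, 0 < e s a)
    (ζ : ℝ) (hover : ∀ s a, π s a ≤ Real.exp ζ * e s a)
    (d : S → ℝ) (hd : IsProbVec d)
    (k j : ℕ) (hjk : j ≤ k)
    (M₁ : ℝ) (hM₁ : 0 ≤ M₁) (r : S → A → ℝ) (hr : ∀ s a, |r s a| ≤ M₁) :
    |∑ s : Fin (k + j + 1) → S, ∑ a : Fin (k + j + 1) → A,
        d (s 0) * (∏ h, e (s h) (a h)) *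
          (∏ h : Fin (k + j), P (a h.castSucc) (s h.castSucc) (s h.succ)) *
          (∏ h ∈ Finset.univ.filter (fun h : Fin (k + j + 1) => h.val < j),
            π (s h) (a h) / e (s h) (a h)) *
          (∏ h ∈ Finset.univ.filter (fun h : Fin (k + j + 1) => j ≤ h.val ∧ h.val ≤ k),
            (π (s h) (a h) / e (s h) (a h)) ^ 2) *
          (∏ h ∈ Finset.univ.filter (fun h : Fin (k + j + 1) => k + 1 ≤ h.val),
            π (s h) (a h) / e (s h) (a h)) *
          r (s ⟨k, by omega⟩) (a ⟨k, by omega⟩) *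
          r (s (Fin.last (k + j))) (a (Fin.last (k + j)))|
      ≤ M₁ ^ 2 * Real.exp (ζ * ((k : ℝ) - j + 1)) := by
  let w : Fin (k + j + 1) → S → A → ℝ := fun h => overlapWeight e π j k h
  have hw : ∀ h s a, 0 ≤ w h s a := fun h => overlapWeight_nonneg hepos (fun s => (hπ s).1) j k h
  calc _ ≤ ∑ s : Fin (k + j + 1) → S, ∑ a : Fin (k + j + 1) → A, M₁ ^ 2 *
        (d (s 0) * (∏ h, w h (s h) (a h)) *
          ∏ h : Fin (k + j), P (a h.castSucc) (s h.castSucc) (s h.succ)) := by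
        refine (abs_sum_le_sum_abs _ _).trans (sum_le_sum fun s _ =>
          (abs_sum_le_sum_abs _ _).trans (sum_le_sum fun a _ => ?_))
        have hweight : 0 ≤ d (s 0) * (∏ h, w h (s h) (a h)) *
            ∏ h : Fin (k + j), P (a h.castSucc) (s h.castSucc) (s h.succ) :=
          mul_nonneg (mul_nonneg (hd.1 _) (prod_nonneg fun h _ => hw _ _ _))
            (prod_nonneg fun h _ => (hP _).1 _ _)
        refine (congrArg abs ?_).trans_le (abs_mul_mul_le_sq_mul hweight hM₁
          (hr (s ⟨k, by omega⟩) (a ⟨k, by omega⟩)) (hr (s (Fin.last _)) (a (Fin.last _))))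
        simp only [w, overlapWeight, prod_mul_distrib,
          ← prod_filter_lt_mul_prod_filter_sq_mul_prod_filter_gt (by omega : j ≤ k + 1)]
        ring
    _ = M₁ ^ 2 * weightedTrajectorySum P d w := by simp only [weightedTrajectorySum, mul_sum]
    _ ≤ M₁ ^ 2 * Real.exp (ζ * ((k : ℝ) - j + 1)) := by
        rw [← prod_ite_exp_window (n := k + j + 1) (by omega) (by omega)]
        exact mul_le_mul_of_nonneg_left (weightedTrajectorySum_le_prod hP hw
          (fun h => sum_overlapWeight_le hepos hπ hover j k h) hd) (sq_nonneg _)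
end

section
/- Rate computation for the tuned window length (Corollary 1, arithmetic form): Let t₀, ζ, C₀, M₁, M₂ > 0. There exists a constant C₁ > 0, depending only on t₀, ζ, C₀, M₁, M₂, such that for every natural number n ≥ 1 and every real N ≥ 1, taking the real window length k = (t₀/(t₀·ζ + 2)) · log(C₀·N), one has 4·M₁²·exp(−2·k/t₀) + (exp(ζ·k)/N)·( M₂ + 2·M₁²·exp(ζ)/(exp(ζ)−1) ) + 4·M₁²·exp(−k/t₀)/((1 − exp(−1/t₀))·N) + M₁²/n ≤ C₁ · N^{−2/(t₀·ζ+2)} + M₁²/n. In particular, with N = n·(T−k), the mean-squared-error bound of Theorem 1 decays polynomially in n·T with exponent −2/(t₀·ζ+2), up to the M₁²/n term. -/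
/-!
Write `s = t₀ ζ + 2` and `k = (t₀ / s) log (C₀ N)`. Every exponential in `k` is a real power of
`C₀ N`: the bias term `exp (-2k/t₀)` is `(C₀ N)^(-2/s)`, and the variance term `exp (ζ k) / N` is
`C₀^(ζ t₀/s) N^(ζ t₀/s - 1) = C₀^(ζ t₀/s) N^(-2/s)`, since `ζ t₀ - s = -2`; this balancing is the
reason for the choice of `k`. The remaining term `exp (-k/t₀) / N` is `C₀^(-1/s) N^(-1/s - 1)`,
which is at most `C₀^(-1/s) N^(-2/s)` because `N ≥ 1` and `s ≥ 1`.
-/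

open Real

namespace TunedWindow

variable {t₀ ζ C₀ N : ℝ}

lemma exp_mul_log_eq_rpow {u : ℝ} (hu : 0 < u) (x : ℝ) : exp (x * log u) = u ^ x := by
  rw [rpow_def_of_pos hu, mul_comm]

lemma exp_bias_eq (ht₀ : t₀ ≠ 0) (s : ℝ) (hC₀ : 0 < C₀) (hN : 0 < N) :
    exp (-2 * (t₀ / s * log (C₀ * N)) / t₀) = C₀ ^ (-(2 / s)) * N ^ (-(2 / s)) := by
  rw [← mul_rpow hC₀.le hN.le, ← exp_mul_log_eq_rpow (by positivity)]
  congr 1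
  field_simp

lemma exp_variance_div_eq (hs : t₀ * ζ + 2 ≠ 0) (hC₀ : 0 < C₀) (hN : 0 < N) :
    exp (ζ * (t₀ / (t₀ * ζ + 2) * log (C₀ * N))) / N =
      C₀ ^ (ζ * t₀ / (t₀ * ζ + 2)) * N ^ (-(2 / (t₀ * ζ + 2))) := by
  have hexponent : -(2 / (t₀ * ζ + 2)) = ζ * t₀ / (t₀ * ζ + 2) - 1 := by
    field_simp
    ring
  rw [hexponent, rpow_sub_one hN.ne', ← mul_div_assoc, ← mul_rpow hC₀.le hN.le,
    ← exp_mul_log_eq_rpow (by positivity)]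
  congr 2
  ring

lemma exp_tail_div_le (ht₀ : t₀ ≠ 0) {s : ℝ} (hs : 1 ≤ s) (hC₀ : 0 < C₀) (hN : 1 ≤ N) :
    exp (-(t₀ / s * log (C₀ * N)) / t₀) / N ≤ C₀ ^ (-(1 / s)) * N ^ (-(2 / s)) := by
  have hN₀ : 0 < N := by linarith
  have hexp : exp (-(t₀ / s * log (C₀ * N)) / t₀) = C₀ ^ (-(1 / s)) * N ^ (-(1 / s)) := by
    rw [← mul_rpow hC₀.le hN₀.le, ← exp_mul_log_eq_rpow (by positivity)]
    congr 1
    field_simp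
  have hexponent : -(1 / s) - 1 ≤ -(2 / s) := by
    have : 1 / s ≤ 1 := (div_le_one (by linarith)).mpr hs
    linarith [show 2 / s = 1 / s + 1 / s by ring]
  rw [hexp, mul_div_assoc, ← rpow_sub_one hN₀.ne']
  gcongr

end TunedWindow

open TunedWindow in
/-- Rate computation for the tuned window length (Corollary 1, arithmetic form):
with the real window length `k = (t₀/(t₀ ζ + 2)) log (C₀ N)`, the
mean-squared-error bound of Theorem 1 (with `n (T − k)` abstracted as `N`) is at
most `C₁ N^{−2/(t₀ ζ + 2)} + M₁²/n` for a constant `C₁` depending only on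
`t₀, ζ, C₀, M₁, M₂`. -/
theorem tuned_window_rate
    (t₀ ζ C₀ M₁ M₂ : ℝ) (ht₀ : 0 < t₀) (hζ : 0 < ζ) (hC₀ : 0 < C₀)
    (hM₁ : 0 < M₁) (hM₂ : 0 < M₂) :
    ∃ C₁ : ℝ, 0 < C₁ ∧ ∀ n : ℕ, 1 ≤ n → ∀ N : ℝ, 1 ≤ N →
      4 * M₁ ^ 2 * Real.exp (-2 * ((t₀ / (t₀ * ζ + 2)) * Real.log (C₀ * N)) / t₀)
        + (Real.exp (ζ * ((t₀ / (t₀ * ζ + 2)) * Real.log (C₀ * N))) / N) *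
            (M₂ + 2 * M₁ ^ 2 * Real.exp ζ / (Real.exp ζ - 1))
        + 4 * M₁ ^ 2 * Real.exp (-((t₀ / (t₀ * ζ + 2)) * Real.log (C₀ * N)) / t₀) /
            ((1 - Real.exp (-1 / t₀)) * N)
        + M₁ ^ 2 / (n : ℝ)
      ≤ C₁ * N ^ (-(2 / (t₀ * ζ + 2))) + M₁ ^ 2 / (n : ℝ) := by
  set s := t₀ * ζ + 2
  set B := M₂ + 2 * M₁ ^ 2 * exp ζ / (exp ζ - 1)
  set D := 1 - exp (-1 / t₀)
  have hs : 2 ≤ s := by nlinarith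
  have hB : 0 < B := by
    have : 0 < exp ζ - 1 := by linarith [add_one_lt_exp hζ.ne']
    positivity
  have hD : 0 < D := sub_pos.mpr (exp_lt_one_iff.mpr (div_neg_of_neg_of_pos neg_one_lt_zero ht₀))
  refine ⟨4 * M₁ ^ 2 * C₀ ^ (-(2 / s)) + C₀ ^ (ζ * t₀ / s) * B + 4 * M₁ ^ 2 / D * C₀ ^ (-(1 / s)),
    by positivity, fun n _ N hN => ?_⟩
  have hN₀ : 0 < N := by linarith
  gcongr ?_ + _
  calc _ = 4 * M₁ ^ 2 * exp (-2 * (t₀ / s * log (C₀ * N)) / t₀)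
          + exp (ζ * (t₀ / s * log (C₀ * N))) / N * B
          + 4 * M₁ ^ 2 / D * (exp (-(t₀ / s * log (C₀ * N)) / t₀) / N) := by
        field_simp
    _ ≤ 4 * M₁ ^ 2 * (C₀ ^ (-(2 / s)) * N ^ (-(2 / s)))
          + C₀ ^ (ζ * t₀ / s) * N ^ (-(2 / s)) * B
          + 4 * M₁ ^ 2 / D * (C₀ ^ (-(1 / s)) * N ^ (-(2 / s))) := by
        rw [exp_bias_eq ht₀.ne' s hC₀ hN₀, exp_variance_div_eq (by positivity) hC₀ hN₀]
        gcongr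
        exact exp_tail_div_le ht₀.ne' (by linarith) hC₀ hN
    _ = _ := by ring
end

section
/- Stationary distribution of the reset chain (key computation underlying Lemmas 4 and 5): Fix an integer Q ≥ 2 and p ∈ [0,1]. Define the Q × Q matrix P on states {1,…,Q} by: for every state j, P(j, 1) = 1−p, P(j, min(j+1, Q)) = p, and all other entries are 0. Then P is row-stochastic, and the vector v on {1,…,Q} defined by v(j) = (1−p)·p^{j−1} for 1 ≤ j ≤ Q−1 and v(Q) = p^{Q−1} is a probability vector satisfying v ⬝ P = v. In particular, the stationary probability of the last state equals p^{Q−1}. -/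
/-!
Every row of the reset chain puts mass `1 - p` on the first state, so any probability vector
`v` is mapped to one with first entry `1 - p`; the other states are entered only by a forward
step of probability `p`. Balance therefore reads `v 1 = 1 - p`, `v (j + 1) = p * v j` for
`j + 1 < Q`, and `v Q = p * (v (Q - 1) + v Q)` at the saturating last state, which the
truncated geometric vector satisfies; it sums to `1` by the finite geometric series.
-/

open Finset

section ResetKernel

variable {S : Type*} [Fintype S] [DecidableEq S]

def resetKernel (p : ℝ) (r : S) (σ : S → S) : S → S → ℝ := fun j i =>
  (if i = r then 1 - p else 0) + (if i = σ j then p else 0)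

theorem isStochastic_resetKernel {p : ℝ} (hp : p ∈ Set.Icc (0 : ℝ) 1) (r : S) (σ : S → S) :
    IsStochastic (resetKernel p r σ) := by
  obtain ⟨hp0, hp1⟩ := hp
  refine ⟨fun j i => ?_, fun j => ?_⟩
  · unfold resetKernel
    split_ifs <;> linarith
  · simp [resetKernel, sum_add_distrib]

theorem rowAct_resetKernel (p : ℝ) (r : S) (σ : S → S) (f : S → ℝ) (i : S) :
    rowAct (resetKernel p r σ) f i =
      (if i = r then (1 - p) * ∑ j, f j else 0) + p * ∑ j with σ j = i, f j := by
  simp only [rowAct, resetKernel, mul_add, sum_add_distrib, sum_filter, mul_sum]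
  congr 1
  · split_ifs <;> simp [mul_comm]
  · exact sum_congr rfl fun j _ => by simp only [eq_comm (a := i)]; split_ifs <;> ring

end ResetKernel

def Fin.satSucc {Q : ℕ} (hQ : 0 < Q) (j : Fin Q) : Fin Q :=
  ⟨min (j.val + 1) (Q - 1), by omega⟩

section SatSucc

variable {Q : ℕ} (hQ : 0 < Q)

theorem Fin.filter_satSucc_eq_zero (hQ2 : 2 ≤ Q) :
    ({j | Fin.satSucc hQ j = ⟨0, hQ⟩} : Finset (Fin Q)) = ∅ := by
  ext j
  simp only [Fin.satSucc, Fin.ext_iff, mem_filter_univ, notMem_empty, iff_false]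
  omega

theorem Fin.filter_satSucc_eq_of_lt {i : Fin Q} (hi0 : 0 < i.val) (hi : i.val < Q - 1) :
    ({j | Fin.satSucc hQ j = i} : Finset (Fin Q)) = {⟨i.val - 1, by omega⟩} := by
  ext j
  simp only [Fin.satSucc, Fin.ext_iff, mem_filter_univ, mem_singleton]
  omega

theorem Fin.filter_satSucc_eq_last :
    ({j | Fin.satSucc hQ j = ⟨Q - 1, by omega⟩} : Finset (Fin Q)) =
      {⟨Q - 2, by omega⟩, ⟨Q - 1, by omega⟩} := by
  ext j
  simp only [Fin.satSucc, Fin.ext_iff, mem_filter_univ, mem_singleton, mem_insert]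
  omega

end SatSucc

section ResetStationary

variable (p : ℝ) (Q : ℕ)

def resetStationary : Fin Q → ℝ := fun i =>
  if i.val = Q - 1 then p ^ (Q - 1) else (1 - p) * p ^ i.val

variable {p Q}

theorem sum_resetStationary (hQ : 0 < Q) : ∑ i, resetStationary p Q i = 1 := by
  obtain ⟨n, rfl⟩ : ∃ n, Q = n + 1 := ⟨Q - 1, by omega⟩
  have hcast (i : Fin n) : resetStationary p (n + 1) i.castSucc = (1 - p) * p ^ i.val := by
    simp [resetStationary, i.isLt.ne]
  rw [Fin.sum_univ_castSucc]
  simp only [hcast]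
  rw [← mul_sum, Fin.sum_univ_eq_sum_range (p ^ ·), mul_neg_geom_sum]
  simp [resetStationary]

theorem isProbVec_resetStationary (hp : p ∈ Set.Icc (0 : ℝ) 1) (hQ : 0 < Q) :
    IsProbVec (resetStationary p Q) := by
  obtain ⟨hp0, hp1⟩ := hp
  refine ⟨fun i => ?_, sum_resetStationary hQ⟩
  unfold resetStationary
  split_ifs
  · positivity
  · exact mul_nonneg (by linarith) (by positivity)

theorem rowAct_resetStationary (hQ : 2 ≤ Q) :
    rowAct (resetKernel p ⟨0, Nat.zero_lt_of_lt hQ⟩ (Fin.satSucc (Nat.zero_lt_of_lt hQ)))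
      (resetStationary p Q) = resetStationary p Q := by
  funext i
  rw [rowAct_resetKernel, sum_resetStationary (by omega)]
  obtain ⟨i, hiQ⟩ := i
  rcases Nat.eq_zero_or_pos i with rfl | hi0
  · rw [Fin.filter_satSucc_eq_zero _ hQ]
    simp [resetStationary, show 0 ≠ Q - 1 by omega]
  rw [if_neg (by simp only [Fin.ext_iff]; omega), zero_add]
  obtain ⟨k, rfl⟩ : ∃ k, i = k + 1 := ⟨i - 1, by omega⟩
  rcases (by omega : k + 1 < Q - 1 ∨ k + 1 = Q - 1) with hk | hk
  · rw [Fin.filter_satSucc_eq_of_lt _ hi0 hk, sum_singleton]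
    simp only [resetStationary, add_tsub_cancel_right, show k ≠ Q - 1 by omega, ↓reduceIte, hk.ne,
      pow_succ]
    ring
  · rw [show (⟨k + 1, hiQ⟩ : Fin Q) = ⟨Q - 1, by omega⟩ from Fin.ext hk,
      Fin.filter_satSucc_eq_last, sum_pair (by simp only [ne_eq, Fin.ext_iff]; omega)]
    simp only [resetStationary, show Q - 2 ≠ Q - 1 by omega, ↓reduceIte]
    rw [show Q - 2 = k by omega, ← hk, pow_succ]
    ring

end ResetStationary

/-- States are `0`-indexed: state `j` of the paper is index `j - 1`. -/
theorem reset_chain_stationary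
    (Q : ℕ) (hQ : 2 ≤ Q) (p : ℝ) (hp : p ∈ Set.Icc (0 : ℝ) 1) :
    let P : Fin Q → Fin Q → ℝ := fun j i =>
      (if i = (⟨0, by omega⟩ : Fin Q) then 1 - p else 0) +
        (if i = (⟨min (j.val + 1) (Q - 1), by omega⟩ : Fin Q) then p else 0)
    let v : Fin Q → ℝ := fun i =>
      if i.val = Q - 1 then p ^ (Q - 1) else (1 - p) * p ^ i.val
    IsStochastic P ∧ IsProbVec v ∧ rowAct P v = v ∧
      v ⟨Q - 1, by omega⟩ = p ^ (Q - 1) := by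
  have hQ0 : 0 < Q := by omega
  exact ⟨isStochastic_resetKernel hp _ (Fin.satSucc hQ0), isProbVec_resetStationary hp hQ0,
    rowAct_resetStationary hQ, if_pos rfl⟩
end
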